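/- Let (A,↘,↗,↖,↙) be a quadri-algebra over a field of characteristic zero. Then the operations x▷y = x↘y − y↖x and x◁y = x↗y − y↙x define an L-dendriform algebra structure on A. -/

import Mathlib

/-- An L-dendriform algebra structure. -/
def IsLDendriform {K A : Type*} [Field K] [AddCommGroup A] [Module K A]
    (tr tl : A →ₗ[K] A →ₗ[K] A) : Prop :=
  (∀ x y z : A, tr x (tr y z) =
      tr (tr x y) z + tr (tl x y) z + tr y (tr x z) - tr (tl y x) z - tr (tr y x) z) ∧
  (∀ x y z : A, tr x (tl y z) =
      tl (tr x y) z + tl y (tr x z) + tl y (tl x z) - tl (tl y x) z)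

/-- A quadri-algebra structure: four bilinear operations `se` (`↘`), `ne` (`↗`),
`nw` (`↖`), `sw` (`↙`) satisfying the nine quadri-algebra axioms, where
`x≻y = x↗y + x↘y`, `x≺y = x↖y + x↙y`, `x∨y = x↘y + x↙y`, `x∧y = x↗y + x↖y` and
`x∗y = x↘y + x↗y + x↖y + x↙y`. -/
def IsQuadri {K A : Type*} [Field K] [AddCommGroup A] [Module K A]
    (se ne nw sw : A →ₗ[K] A →ₗ[K] A) : Prop :=
  (∀ x y z : A, nw (nw x y) z = nw x (se y z + ne y z + nw y z + sw y z)) ∧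
  (∀ x y z : A, nw (ne x y) z = ne x (nw y z + sw y z)) ∧
  (∀ x y z : A, ne (ne x y + nw x y) z = ne x (ne y z + se y z)) ∧
  (∀ x y z : A, nw (sw x y) z = sw x (ne y z + nw y z)) ∧
  (∀ x y z : A, nw (se x y) z = se x (nw y z)) ∧
  (∀ x y z : A, ne (se x y + sw x y) z = se x (ne y z)) ∧
  (∀ x y z : A, sw (nw x y + sw x y) z = sw x (se y z + sw y z)) ∧
  (∀ x y z : A, sw (ne x y + se x y) z = se x (sw y z)) ∧
  (∀ x y z : A, se (se x y + ne x y + nw x y + sw x y) z = se x (se y z))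

/-!
With `x▷y = x↘y − y↖x`, `x◁y = x↗y − y↙x` and `x·y = x▷y + x◁y`, the first L-dendriform
identity says that `x▷(y▷z) − (x·y)▷z` is symmetric in `x` and `y`. Expanding with the
quadri-algebra axioms `(x∗y)↘z = x↘(y↘z)`, `(x↘y)↖z = x↘(y↖z)` and `(x↖y)↖z = x↖(y∗z)`
turns it into an expression that is visibly symmetric. For the second identity, the axioms
for `(x↗y)↖z`, `(x↙y)↖z`, `(x∨y)↗z` and `(x≻y)↙z` rewrite `x▷(y◁z)` so that it cancels
most of the right-hand side, and `(x∧y)↗z = x↗(y≻z)`, `(x≺y)↙z = x↙(y∨z)` match the rest.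
-/

namespace IsQuadri

variable {K A : Type*} [Field K] [AddCommGroup A] [Module K A]
  {se ne nw sw : A →ₗ[K] A →ₗ[K] A}

theorem tr_assoc_eq (h : IsQuadri se ne nw sw) (x y z : A) :
    (se - nw.flip) x ((se - nw.flip) y z) - (se - nw.flip) ((se - nw.flip) x y) z
        - (se - nw.flip) ((ne - sw.flip) x y) z =
      se (nw x y + sw x y + nw y x + sw y x) z - nw (se x z) y - nw (se y z) x
        + nw z (se x y + ne x y + se y x + ne y x) := by
  obtain ⟨hnw, -, -, -, hse_nw, -, -, -, hse⟩ := h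
  simp only [map_add, LinearMap.add_apply] at hnw hse_nw hse
  simp only [LinearMap.sub_apply, LinearMap.flip_apply, map_add, map_sub,
    LinearMap.add_apply]
  linear_combination (norm := module) -hse x y z + hse_nw x z y + hnw z y x

theorem tr_tr_identity (h : IsQuadri se ne nw sw) (x y z : A) :
    (se - nw.flip) x ((se - nw.flip) y z) =
      (se - nw.flip) ((se - nw.flip) x y) z + (se - nw.flip) ((ne - sw.flip) x y) z
        + (se - nw.flip) y ((se - nw.flip) x z) - (se - nw.flip) ((ne - sw.flip) y x) z
        - (se - nw.flip) ((se - nw.flip) y x) z := by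
  have hxy := h.tr_assoc_eq x y z
  have hyx := h.tr_assoc_eq y x z
  simp only [map_add, LinearMap.add_apply] at hxy hyx
  linear_combination (norm := module) hxy - hyx

theorem tr_tl_identity (h : IsQuadri se ne nw sw) (x y z : A) :
    (se - nw.flip) x ((ne - sw.flip) y z) =
      (ne - sw.flip) ((se - nw.flip) x y) z + (ne - sw.flip) y ((se - nw.flip) x z)
        + (ne - sw.flip) y ((ne - sw.flip) x z) - (ne - sw.flip) ((ne - sw.flip) y x) z := by
  obtain ⟨-, hnw_ne, hne_ne, hnw_sw, -, hse_ne, hsw_sw, hse_sw, -⟩ := h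
  simp only [map_add, LinearMap.add_apply] at hnw_ne hne_ne hnw_sw hse_ne hsw_sw hse_sw
  simp only [LinearMap.sub_apply, LinearMap.flip_apply, map_sub]
  linear_combination (norm := module) -hse_ne x y z + hse_sw x z y - hnw_ne y z x
    + hnw_sw z y x + hne_ne y x z - hsw_sw z x y

end IsQuadri

theorem LDendriform_of_quadri_general {K A : Type*} [Field K]
    [AddCommGroup A] [Module K A]
    (se ne nw sw : A →ₗ[K] A →ₗ[K] A) (h : IsQuadri se ne nw sw) :
    IsLDendriform (se - nw.flip) (ne - sw.flip) :=
  ⟨h.tr_tr_identity, h.tr_tl_identity⟩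

/-- For a quadri-algebra `(A,↘,↗,↖,↙)` over a field of characteristic
zero, the operations `x▷y = x↘y − y↖x` and `x◁y = x↗y − y↙x` (i.e. `se - nw.flip`
and `ne - sw.flip`) define an L-dendriform algebra structure on `A`. -/
theorem LDendriform_of_quadri {K A : Type*} [Field K] [CharZero K]
    [AddCommGroup A] [Module K A]
    (se ne nw sw : A →ₗ[K] A →ₗ[K] A) (h : IsQuadri se ne nw sw) :
    IsLDendriform (se - nw.flip) (ne - sw.flip) :=
  LDendriform_of_quadri_general se ne nw sw h
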